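/- For any geodesic ν in M and any curve c in M_ν with ℝ-growth rate A (i.e. lim_{t→∞} ℝ_ν(c(t))/t = A), the curve G_ν ∘ c in M'_{F̃(ν)} also has ℝ-growth rate A. -/

import Mathlib

/-!
The `ℝ`-coordinate of `M_ν ≅ X_ν × ℝ` is, up to an additive constant, a Busemann function of
`ν`: `ℝ_ν(x) = lim_{T → ∞} (T - d(x, ν T)) + e`. If `p` is a geodesic parallel to `ν`, the geodesic
from `p 0` to `ν T` fellow-travels `p` near its start and `ν` near its end, by convexity of the
distance between geodesics in nonpositive curvature. Its image under the uniformly continuous,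
flow-equivariant `F̃` is a geodesic of the same length whose ends are uniformly close to
`F̃ p 0` and `F̃ ν T`, so `d(F̃ p 0, F̃ ν T) - d(p 0, ν T) → 0`. Hence `G_ν` shifts the
`ℝ`-coordinate by a constant, which does not change growth rates.
-/

open Metric Set Filter

/-- A unit-speed (local) geodesic line in a metric space: locally, distances along the
curve are realized. -/
def IsUnitGeodesic {M : Type*} [MetricSpace M] (c : ℝ → M) : Prop :=
  ∃ ε > 0, ∀ s t : ℝ, |s - t| ≤ ε → dist (c s) (c t) = |s - t|

/-- The unit sphere bundle `S¹M`, modeled as the space of unit-speed geodesics of `M`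
(a geodesic records the basepoint `c 0` together with its direction). -/
def SphereBundle (M : Type*) [MetricSpace M] : Type _ :=
  {c : ℝ → M // IsUnitGeodesic c}

instance {M : Type*} [MetricSpace M] : TopologicalSpace (SphereBundle M) :=
  inferInstanceAs (TopologicalSpace {c : ℝ → M // IsUnitGeodesic c})

/-- The geodesic flow `g_t` on the unit sphere bundle. -/
def geodFlow {M : Type*} [MetricSpace M] (t : ℝ) (c : SphereBundle M) : SphereBundle M :=
  ⟨fun s => c.1 (s + t), by
    obtain ⟨ε, hε, h⟩ := c.2
    refine ⟨ε, hε, fun s s' hss => ?_⟩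
    have : |s + t - (s' + t)| ≤ ε := by simpa [add_sub_add_right_eq_sub] using hss
    simpa [add_sub_add_right_eq_sub] using h (s + t) (s' + t) this⟩

/-- A `C⁰` conjugacy between the geodesic flows of `N` and `N'`. -/
structure FlowConjugacy (N N' : Type*) [MetricSpace N] [MetricSpace N'] where
  F : SphereBundle N → SphereBundle N'
  continuous : Continuous F
  conj : ∀ (t : ℝ) (c : SphereBundle N), F (geodFlow t c) = geodFlow t (F c)

/-- `m` is a midpoint of `y` and `z`. -/
def IsMidpointPt {M : Type*} [MetricSpace M] (y z m : M) : Prop :=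
  dist y m = dist y z / 2 ∧ dist m z = dist y z / 2

/-- The CAT(0) (nonpositive curvature) comparison inequality for a midpoint `m` of `y,z`,
viewed from `x`. -/
def CAT0Comparison {M : Type*} [MetricSpace M] (x y z m : M) : Prop :=
  dist x m ^ 2 ≤ (dist x y ^ 2 + dist x z ^ 2) / 2 - dist y z ^ 2 / 4

/-- `M` is (like) a Hadamard space: it is a geodesic space in which every unit-speed local
geodesic is globally minimizing, and the CAT(0) comparison inequality holds; this encodes
that `M` is a simply connected space of nonpositive curvature. -/
def IsHadamardLike (M : Type*) [MetricSpace M] : Prop :=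
  (∀ x y : M, ∃ c : SphereBundle M, c.1 0 = x ∧ c.1 (dist x y) = y) ∧
  (∀ c : SphereBundle M, ∀ s t : ℝ, dist (c.1 s) (c.1 t) = |s - t|) ∧
  (∀ x y z m : M, IsMidpointPt y z m → CAT0Comparison x y z m)

/-- The action of a group element on the unit sphere bundle (by isometries). -/
def gAct {Γ M : Type*} [Group Γ] [MetricSpace M] [MulAction Γ M] [IsIsometricSMul Γ M]
    (g : Γ) (c : SphereBundle M) : SphereBundle M :=
  ⟨fun t => g • c.1 t, by
    obtain ⟨ε, hε, h⟩ := c.2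
    exact ⟨ε, hε, fun s t hst => by rw [dist_smul]; exact h s t hst⟩⟩

/-- The action of `Γ` on `M` is cocompact (i.e. the quotient `N = M/Γ` is compact). -/
def CocompactAction (Γ M : Type*) [Group Γ] [MetricSpace M] [MulAction Γ M] : Prop :=
  ∃ K : Set M, IsCompact K ∧ (⋃ g : Γ, (fun m => g • m) '' K) = Set.univ

/-- Uniform continuity of a map between unit sphere bundles (distances between unit
vectors are measured by comparing the corresponding geodesics on the time interval
`[-1, 1]`). -/
def UnifContOnSphere {N N' : Type*} [MetricSpace N] [MetricSpace N']
    (F : SphereBundle N → SphereBundle N') : Prop :=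
  ∀ ε > (0:ℝ), ∃ δ > (0:ℝ), ∀ c c' : SphereBundle N,
    (∀ t ∈ Set.Icc (-1:ℝ) 1, dist (c.1 t) (c'.1 t) ≤ δ) →
    ∀ t ∈ Set.Icc (-1:ℝ) 1, dist ((F c).1 t) ((F c').1 t) ≤ ε

/-- The geodesic `c` stays within bounded distance of the geodesic `ν` with the same
parametrization; such `c` are exactly the "vertical" geodesics of `M_ν ≅ X_ν × ℝ`. -/
def ParallelTo {M : Type*} [MetricSpace M] (ν c : SphereBundle M) : Prop :=
  ∃ C : ℝ, ∀ t : ℝ, dist (c.1 t) (ν.1 t) ≤ C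

/-- `M_ν`: the union of all geodesics staying a bounded distance from `ν`. -/
def MSet {M : Type*} [MetricSpace M] (ν : SphereBundle M) : Set M :=
  {x | ∃ c : SphereBundle M, ParallelTo ν c ∧ x ∈ Set.range c.1}

/-- The minimal displacement set `M_γ` of an isometry `γ`. -/
def MinDispSet {Γ : Type*} [Group Γ] (M : Type*) [MetricSpace M] [MulAction Γ M]
    (γ : Γ) : Set M :=
  {m | ∀ x : M, dist m (γ • m) ≤ dist x (γ • x)}

/-- The point of the `ℓ²`-product `X × ℝ` with coordinates `(x, s)`. -/
noncomputable def pmk {X : Type*} [MetricSpace X] (x : X) (s : ℝ) : WithLp 2 (X × ℝ) :=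
  (WithLp.equiv 2 (X × ℝ)).symm (x, s)


/-- The product structure `M_ν ≅ X_ν × ℝ` (with the `ℓ²` = Riemannian product metric):
an isometric parametrization of `M_ν` by `X × ℝ` whose `ℝ`-lines are exactly the vertical
geodesics (the geodesics parallel to `ν`).  The `ℝ`-projection `ℝ_ν` of a point
`Φ (pmk x s)` is `s`. -/
structure VerticalSplitting {M : Type*} [MetricSpace M] (ν : SphereBundle M)
    (X : Type*) [MetricSpace X] where
  Φ : WithLp 2 (X × ℝ) → M
  isom : Isometry Φ
  range_eq : Set.range Φ = MSet ν
  vertical : ∀ x : X, ∃ p : SphereBundle M,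
    (∀ s : ℝ, p.1 s = Φ (pmk x s)) ∧ ParallelTo ν p

lemma nonpos_of_midpoint_convex {g : ℝ → ℝ} (hg : Continuous g)
    (hmid : ∀ u v, g ((u + v) / 2) ≤ (g u + g v) / 2) {a b : ℝ} (hab : a ≤ b)
    (ha : g a ≤ 0) (hb : g b ≤ 0) {u : ℝ} (hu : u ∈ Icc a b) : g u ≤ 0 := by
  obtain ⟨w, hwI, hmax⟩ := isCompact_Icc.exists_isMaxOn (nonempty_Icc.2 hab) hg.continuousOn
  by_contra! hpos
  have hw : 0 < g w := hpos.trans_le (hmax hu)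
  -- the leftmost maximum point `s` cannot be interior: the midpoint inequality fails there
  set K := Icc a b ∩ {v | g w ≤ g v}
  have hKbdd : BddBelow K := bddBelow_Icc.mono inter_subset_left
  have hsK : sInf K ∈ K :=
    (isClosed_Icc.inter (isClosed_le continuous_const hg)).csInf_mem ⟨w, hwI, le_refl (g w)⟩ hKbdd
  set s := sInf K
  obtain ⟨⟨has, hsb⟩, hs⟩ := hsK
  simp only [mem_ofPred_eq] at hs
  have has' : a < s := has.lt_of_ne fun h => by rw [← h] at hs; linarith
  have hsb' : s < b := hsb.lt_of_ne fun h => by rw [h] at hs; linarith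
  set r := min (s - a) (b - s)
  have hr : 0 < r := lt_min (by linarith) (by linarith)
  have hleft : g (s - r) < g w := by
    by_contra! hle
    have : s ≤ s - r := csInf_le hKbdd
      ⟨⟨by linarith [min_le_left (s - a) (b - s)], by linarith⟩, hle⟩
    linarith
  have hright : g (s + r) ≤ g w :=
    hmax ⟨by linarith, by linarith [min_le_right (s - a) (b - s)]⟩
  have := hmid (s - r) (s + r)
  rw [show (s - r + (s + r)) / 2 = s by ring] at this
  linarith

theorem convexOn_univ_of_midpoint {f : ℝ → ℝ} (hf : Continuous f)
    (hmid : ∀ u v, f ((u + v) / 2) ≤ (f u + f v) / 2) : ConvexOn ℝ univ f := by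
  refine LinearOrder.convexOn_of_lt convex_univ fun x _ z _ hxz a b ha hb hab => ?_
  set k := (f z - f x) / (z - x)
  set ℓ : ℝ → ℝ := fun u => f x + (u - x) * k
  have hxz0 : z - x ≠ 0 := sub_ne_zero.2 hxz.ne'
  have hy : a • x + b • z = x + b * (z - x) := by
    simp only [smul_eq_mul]; linear_combination x * hab
  have key := nonpos_of_midpoint_convex (g := fun u => f u - ℓ u) (by fun_prop)
    (fun u v => by simp only [ℓ]; linear_combination hmid u v) hxz.le (by simp [ℓ])
    (by simp only [ℓ, k]; rw [mul_div_cancel₀ _ hxz0]; linarith)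
    (u := a • x + b • z) (by rw [hy]; constructor <;> nlinarith)
  have hℓ : ℓ (a • x + b • z) = a • f x + b • f z := by
    simp only [ℓ, k]
    rw [hy, add_sub_cancel_left, mul_assoc, mul_div_cancel₀ _ hxz0]
    linear_combination (-f x) * hab
  linarith

lemma ConvexOn.apply_add_mul_sub_le {f : ℝ → ℝ} (hf : ConvexOn ℝ univ f) {a b θ : ℝ}
    (ha : f a ≤ 0) (hθ : θ ∈ Icc (0 : ℝ) 1) : f (a + θ * (b - a)) ≤ θ * f b := by
  have := hf.2 (mem_univ a) (mem_univ b) (sub_nonneg.2 hθ.2) hθ.1 (sub_add_cancel 1 θ)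
  simp only [smul_eq_mul] at this
  rw [show a + θ * (b - a) = (1 - θ) * a + θ * b by ring]
  nlinarith [hθ.2]

lemma tendsto_sqrt_sq_add_sq_sub (d : ℝ) :
    Tendsto (fun w : ℝ => √(d ^ 2 + w ^ 2) - w) atTop (nhds 0) := by
  have hdiv : Tendsto (fun w : ℝ => d ^ 2 / w) atTop (nhds 0) :=
    tendsto_const_nhds.div_atTop tendsto_id
  refine tendsto_of_tendsto_of_tendsto_of_le_of_le' tendsto_const_nhds hdiv ?_ ?_
  all_goals filter_upwards [eventually_gt_atTop 0] with w hw
  · have := Real.sqrt_le_sqrt (show w ^ 2 ≤ d ^ 2 + w ^ 2 by nlinarith)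
    rw [Real.sqrt_sq hw.le] at this
    linarith
  · rw [sub_le_iff_le_add, Real.sqrt_le_left (by positivity)]
    nlinarith [div_mul_cancel₀ (d ^ 2) hw.ne', sq_nonneg (d ^ 2 / w)]

lemma WithLp.prod_dist_eq_sqrt {X Y : Type*} [MetricSpace X] [MetricSpace Y]
    (x y : WithLp 2 (X × Y)) : dist x y = √(dist x.fst y.fst ^ 2 + dist x.snd y.snd ^ 2) := by
  rw [WithLp.prod_dist_eq_add (by norm_num), Real.sqrt_eq_rpow, ENNReal.toReal_ofNat]
  norm_cast

lemma dist_pmk {X : Type*} [MetricSpace X] (x y : X) (s u : ℝ) :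
    dist (pmk x s) (pmk y u) = √(dist x y ^ 2 + (s - u) ^ 2) := by
  rw [WithLp.prod_dist_eq_sqrt, Real.dist_eq, sq_abs]
  rfl

/-- Equality case of the triangle inequality in the Euclidean plane. -/
lemma mul_eq_mul_of_sq_add_sq_eq {a₁ a₂ a₃ b₁ b₂ t₁ t₂ : ℝ} (ha₃ : 0 ≤ a₃)
    (h₃ : a₃ ≤ a₁ + a₂) (ht₁ : 0 < t₁) (ht₂ : 0 < t₂)
    (e₁ : a₁ ^ 2 + b₁ ^ 2 = t₁ ^ 2) (e₂ : a₂ ^ 2 + b₂ ^ 2 = t₂ ^ 2)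
    (e₃ : a₃ ^ 2 + (b₁ + b₂) ^ 2 = (t₁ + t₂) ^ 2) :
    b₁ * t₂ = b₂ * t₁ := by
  have hge : t₁ * t₂ ≤ a₁ * a₂ + b₁ * b₂ := by nlinarith
  have hlagrange : (a₁ * b₂ - a₂ * b₁) ^ 2 + (a₁ * a₂ + b₁ * b₂) ^ 2 = (t₁ * t₂) ^ 2 := by
    rw [mul_pow, ← e₁, ← e₂]; ring
  have heq : a₁ * a₂ + b₁ * b₂ = t₁ * t₂ := by
    nlinarith [sq_nonneg (a₁ * b₂ - a₂ * b₁), mul_pos ht₁ ht₂]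
  have hcross : (b₁ * t₂ - b₂ * t₁) ^ 2 = (a₁ * b₂ - a₂ * b₁) ^ 2 := by
    linear_combination (2 * b₁ * b₂) * heq - b₁ ^ 2 * e₂ - b₂ ^ 2 * e₁
  nlinarith [sq_nonneg (a₁ * b₂ - a₂ * b₁), sq_nonneg (b₁ * t₂ - b₂ * t₁)]

theorem eq_pmk_of_isometry {X : Type*} [MetricSpace X] {γ : ℝ → WithLp 2 (X × ℝ)}
    (hγ : Isometry γ) {B : ℝ} (hB : ∀ s, |(γ s).snd - s| ≤ B) (s : ℝ) :
    γ s = pmk (γ 0).fst ((γ 0).snd + s) := by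
  set ξ := fun s => (γ s).fst
  set η := fun s => (γ s).snd
  have hsq : ∀ s u, dist (ξ s) (ξ u) ^ 2 + (η s - η u) ^ 2 = (s - u) ^ 2 := by
    intro s u
    have := hγ.dist_eq s u
    rw [WithLp.prod_dist_eq_sqrt, Real.dist_eq (η s), sq_abs, Real.dist_eq,
      Real.sqrt_eq_iff_eq_sq (by positivity) (abs_nonneg _), sq_abs] at this
    exact this
  have hslope : ∀ s u v, s < u → u < v → (η u - η s) * (v - u) = (η v - η u) * (u - s) :=
    fun s u v hsu huv => mul_eq_mul_of_sq_add_sq_eq dist_nonneg (dist_triangle _ _ _) (sub_pos.2 hsu) (sub_pos.2 huv)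
      (by linear_combination hsq s u) (by linear_combination hsq u v)
      (by linear_combination hsq s v)
  have hB0 : 0 ≤ B := (abs_nonneg _).trans (hB 0)
  -- the slope of `η` on `[s, u]` is also its slope on `[u, v]` for `v` arbitrarily large
  have hdiff : ∀ s u, s < u → η u - η s = u - s := by
    intro s u hsu
    by_contra hne
    set m := η u - η s - (u - s)
    have hm : 0 < |m| := abs_pos.2 (sub_ne_zero.2 hne)
    set v := u + 2 * B * (u - s) / |m| + 1
    have huv : u < v := by
      have : 0 ≤ 2 * B * (u - s) / |m| := by positivity
      linarith
    have key : m * (v - u) = (η v - v - (η u - u)) * (u - s) := by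
      linear_combination hslope s u v hsu huv
    have hbound : |m| * (v - u) ≤ 2 * B * (u - s) := by
      rw [← abs_of_pos (sub_pos.2 huv), ← abs_mul, key, abs_mul, abs_of_pos (sub_pos.2 hsu)]
      gcongr
      linarith [abs_sub (η v - v) (η u - u), hB v, hB u]
    have : |m| * (v - u) = 2 * B * (u - s) + |m| := by
      simp only [v]; field_simp; ring
    linarith
  have hη : η s = η 0 + s := by
    rcases lt_trichotomy s 0 with hs | rfl | hs
    · linarith [hdiff s 0 hs]
    · simp
    · linarith [hdiff 0 s hs]
  have hξ : ξ s = ξ 0 := by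
    have := hsq s 0
    rw [hη, sub_zero, add_sub_cancel_left, add_eq_right, sq_eq_zero_iff] at this
    exact dist_eq_zero.1 this
  exact (WithLp.ext_iff 2).2 (Prod.ext hξ hη)

lemma IsMidpointPt.symm {M : Type*} [MetricSpace M] {x y m : M} (h : IsMidpointPt x y m) :
    IsMidpointPt y x m :=
  ⟨by rw [dist_comm y m, dist_comm y x]; exact h.2, by rw [dist_comm m x, dist_comm y x]; exact h.1⟩

namespace IsHadamardLike

variable {M : Type*} [MetricSpace M] (hM : IsHadamardLike M)
include hM

lemma isometry (c : SphereBundle M) : Isometry c.1 :=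
  Isometry.of_dist_eq fun s t => by rw [hM.2.1, Real.dist_eq]

lemma isMidpointPt (c : SphereBundle M) (u v : ℝ) :
    IsMidpointPt (c.1 u) (c.1 v) (c.1 ((u + v) / 2)) := by
  simp only [IsMidpointPt, hM.2.1]
  constructor
  · rw [show u - (u + v) / 2 = (u - v) / 2 by ring, abs_div, abs_two]
  · rw [show (u + v) / 2 - v = (u - v) / 2 by ring, abs_div, abs_two]

lemma exists_isMidpointPt (x y : M) : ∃ m, IsMidpointPt x y m := by
  obtain ⟨c, hc0, hc1⟩ := hM.1 x y
  exact ⟨_, hc0 ▸ hc1 ▸ hM.isMidpointPt c 0 (dist x y)⟩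

lemma dist_midpoints_le_half {x y z my mz : M} (hy : IsMidpointPt x y my)
    (hz : IsMidpointPt x z mz) : dist my mz ≤ dist y z / 2 := by
  have h1 := hM.2.2 my x z mz hz
  have h2 := hM.2.2 z x y my hy
  simp only [CAT0Comparison] at h1 h2
  rw [dist_comm my x, hy.1] at h1
  rw [dist_comm z my, dist_comm z x, dist_comm z y] at h2
  nlinarith [dist_nonneg (x := my) (y := mz), dist_nonneg (x := y) (y := z)]

lemma dist_midpoints_le {a₁ a₂ b₁ b₂ m₁ m₂ : M} (h₁ : IsMidpointPt a₁ a₂ m₁)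
    (h₂ : IsMidpointPt b₁ b₂ m₂) : dist m₁ m₂ ≤ (dist a₁ b₁ + dist a₂ b₂) / 2 := by
  obtain ⟨m, hm⟩ := hM.exists_isMidpointPt a₁ b₂
  have e₁ := hM.dist_midpoints_le_half h₁ hm
  have e₂ := hM.dist_midpoints_le_half hm.symm h₂.symm
  linarith [dist_triangle m₁ m m₂]

theorem convexOn_dist (c c' : SphereBundle M) :
    ConvexOn ℝ univ fun u => dist (c.1 u) (c'.1 u) :=
  convexOn_univ_of_midpoint
    ((hM.isometry c).continuous.dist (hM.isometry c').continuous)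
    fun u v => hM.dist_midpoints_le (hM.isMidpointPt c u v) (hM.isMidpointPt c' u v)

section Chord

variable {ν p : SphereBundle M} {C T : ℝ} (hC : ∀ t, dist (p.1 t) (ν.1 t) ≤ C) (hT : 0 ≤ T)
include hC hT

lemma abs_dist_sub_le_of_forall_dist_le : |dist (p.1 0) (ν.1 T) - T| ≤ C := by
  have := abs_dist_sub_le (p.1 0) (ν.1 0) (ν.1 T)
  rw [hM.2.1, zero_sub, abs_neg, abs_of_nonneg hT] at this
  exact this.trans (hC 0)

variable {c : SphereBundle M} (hc0 : c.1 0 = p.1 0) (hcL : c.1 (dist (p.1 0) (ν.1 T)) = ν.1 T)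
  (hL : 2 ≤ dist (p.1 0) (ν.1 T))
include hc0 hcL hL

lemma dist_chord_start_le :
    ∀ u ∈ Icc (-1 : ℝ) 1, dist (c.1 (u + 1)) (p.1 (u + 1)) ≤ 4 * C / dist (p.1 0) (ν.1 T) := by
  have hLT := hM.abs_dist_sub_le_of_forall_dist_le hC hT
  set L := dist (p.1 0) (ν.1 T)
  intro u hu
  have hend : dist (c.1 L) (p.1 L) ≤ 2 * C := by
    rw [hcL, two_mul]
    calc dist (ν.1 T) (p.1 L) ≤ dist (ν.1 T) (ν.1 L) + dist (ν.1 L) (p.1 L) := dist_triangle _ _ _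
      _ ≤ C + C := add_le_add (by rw [hM.2.1, abs_sub_comm]; exact hLT)
          (by rw [dist_comm]; exact hC L)
  have hθ : (u + 1) / L ∈ Icc (0 : ℝ) 1 :=
    ⟨div_nonneg (by linarith [hu.1]) (by linarith), (div_le_one (by linarith)).2 (by linarith [hu.2])⟩
  have := (hM.convexOn_dist c p).apply_add_mul_sub_le (a := 0) (b := L) (by simp [hc0]) hθ
  simp only [sub_zero, zero_add, div_mul_cancel₀ _ (show L ≠ 0 by linarith)] at this
  calc _ ≤ (u + 1) / L * (2 * C) := this.trans (by gcongr; exact hθ.1)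
    _ ≤ 2 / L * (2 * C) := by gcongr <;> linarith [hu.2, dist_nonneg.trans (hC 0)]
    _ = _ := by ring

lemma dist_chord_end_le : ∀ u ∈ Icc (-1 : ℝ) 1,
    dist (c.1 (u + (dist (p.1 0) (ν.1 T) - 1))) (ν.1 (u + (T - 1))) ≤
      4 * C / dist (p.1 0) (ν.1 T) := by
  have hLT := hM.abs_dist_sub_le_of_forall_dist_le hC hT
  set L := dist (p.1 0) (ν.1 T)
  intro u hu
  have hstart : dist (c.1 0) (ν.1 (0 + (T - L))) ≤ 2 * C := by
    rw [hc0, zero_add, two_mul]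
    calc dist (p.1 0) (ν.1 (T - L)) ≤ dist (p.1 0) (ν.1 0) + dist (ν.1 0) (ν.1 (T - L)) :=
          dist_triangle _ _ _
      _ ≤ C + C := add_le_add (hC 0) (by rw [hM.2.1, zero_sub, abs_neg, abs_sub_comm]; exact hLT)
  have hθ : (1 - u) / L ∈ Icc (0 : ℝ) 1 :=
    ⟨div_nonneg (by linarith [hu.2]) (by linarith), (div_le_one (by linarith)).2 (by linarith [hu.1])⟩
  have := (hM.convexOn_dist c (geodFlow (T - L) ν)).apply_add_mul_sub_le (a := L) (b := 0)
    (by simp [geodFlow, hcL]) hθ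
  simp only [geodFlow] at this
  rw [show L + (1 - u) / L * (0 - L) = u + (L - 1) by field_simp; ring,
    show u + (L - 1) + (T - L) = u + (T - 1) by ring] at this
  calc _ ≤ (1 - u) / L * (2 * C) := this.trans (by gcongr; exact hθ.1)
    _ ≤ 2 / L * (2 * C) := by gcongr <;> linarith [hu.1, dist_nonneg.trans (hC 0)]
    _ = _ := by ring

end Chord

end IsHadamardLike


namespace VerticalSplitting

variable {M X : Type*} [MetricSpace M] [MetricSpace X] {ν : SphereBundle M}
  (S : VerticalSplitting ν X)

lemma exists_eq_pmk_add (hν : Isometry ν.1) : ∃ x₀ e, ∀ s, ν.1 s = S.Φ (pmk x₀ (s + e)) := by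
  have hmem : ∀ s, ν.1 s ∈ range S.Φ := fun s =>
    S.range_eq ▸ ⟨ν, ⟨0, fun t => by simp⟩, s, rfl⟩
  choose γ hγ using hmem
  have hγiso : Isometry γ := Isometry.of_dist_eq fun s u => by
    rw [← S.isom.dist_eq, hγ, hγ, hν.dist_eq]
  obtain ⟨p, hp, C, hC⟩ := S.vertical (γ 0).fst
  have hB : ∀ s, |(γ s).snd - s| ≤ C := fun s => by
    have := WithLp.dist_snd_le (γ s) (pmk (γ 0).fst s)
    rw [← S.isom.dist_eq, hγ, ← hp, dist_comm (ν.1 s), Real.dist_eq] at this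
    exact this.trans (hC s)
  refine ⟨(γ 0).fst, (γ 0).snd, fun s => ?_⟩
  rw [← hγ, eq_pmk_of_isometry hγiso hB s, add_comm]

lemma tendsto_dist_sub {x₀ : X} {e : ℝ} (hν : ∀ s, ν.1 s = S.Φ (pmk x₀ (s + e))) (x : X)
    (r : ℝ) : Tendsto (fun T => dist (S.Φ (pmk x r)) (ν.1 T) - T) atTop (nhds (e - r)) := by
  have hdist : ∀ T, dist (S.Φ (pmk x r)) (ν.1 T) - T =
      √(dist x x₀ ^ 2 + (T + (e - r)) ^ 2) - (T + (e - r)) + (e - r) := fun T => by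
    rw [hν, S.isom.dist_eq, dist_pmk, show r - (T + e) = -(T + (e - r)) by ring, neg_sq]
    ring
  simp_rw [hdist]
  simpa using ((tendsto_sqrt_sq_add_sq_sub (dist x x₀)).comp
    (tendsto_atTop_add_const_right atTop (e - r) tendsto_id)).add_const (e - r)

end VerticalSplitting

lemma FlowConjugacy.exists_dist_le_of_unifContOnSphere {M M' : Type*} [MetricSpace M]
    [MetricSpace M'] (F : FlowConjugacy M M') (hUC : UnifContOnSphere F.F) {ε : ℝ} (hε : 0 < ε) :
    ∃ δ > 0, ∀ (c c' : SphereBundle M) (s s' : ℝ),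
      (∀ u ∈ Icc (-1 : ℝ) 1, dist (c.1 (u + s)) (c'.1 (u + s')) ≤ δ) →
      ∀ u ∈ Icc (-1 : ℝ) 1, dist ((F.F c).1 (u + s)) ((F.F c').1 (u + s')) ≤ ε := by
  obtain ⟨δ, hδ, hF⟩ := hUC ε hε
  refine ⟨δ, hδ, fun c c' s s' hcc' => ?_⟩
  have := hF (geodFlow s c) (geodFlow s' c') hcc'
  rwa [F.conj, F.conj] at this

theorem tendsto_dist_conj_sub_dist {M M' : Type*} [MetricSpace M] [MetricSpace M']
    (hM : IsHadamardLike M) (hM' : IsHadamardLike M') (F : FlowConjugacy M M')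
    (hUC : UnifContOnSphere F.F) {ν p : SphereBundle M} (hp : ParallelTo ν p) :
    Tendsto (fun T => dist ((F.F p).1 0) ((F.F ν).1 T) - dist (p.1 0) (ν.1 T)) atTop
      (nhds 0) := by
  obtain ⟨C, hC⟩ := hp
  have hC0 : 0 ≤ C := dist_nonneg.trans (hC 0)
  rw [Metric.tendsto_atTop]
  intro ε hε
  obtain ⟨δ, hδ, hF⟩ := F.exists_dist_le_of_unifContOnSphere hUC (by positivity : 0 < ε / 3)
  refine ⟨C + 2 + 4 * C / δ, fun T hT => ?_⟩
  have hCδ : 0 ≤ 4 * C / δ := by positivity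
  have hT0 : 0 ≤ T := by linarith
  have hLT := hM.abs_dist_sub_le_of_forall_dist_le hC hT0
  set L := dist (p.1 0) (ν.1 T)
  have hL : 2 + 4 * C / δ ≤ L := by linarith [(abs_le.1 hLT).1]
  have hL2 : 2 ≤ L := by linarith
  have hLδ : 4 * C / L ≤ δ := by
    rw [div_le_iff₀ (by linarith), ← div_le_iff₀' hδ]
    linarith
  obtain ⟨c, hc0, hcL⟩ := hM.1 (p.1 0) (ν.1 T)
  have hstart := hF c p 1 1
    (fun u hu => (hM.dist_chord_start_le hC hT0 hc0 hcL hL2 u hu).trans hLδ) (-1) (by norm_num)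
  have hend := hF c ν (L - 1) (T - 1)
    (fun u hu => (hM.dist_chord_end_le hC hT0 hc0 hcL hL2 u hu).trans hLδ) 1 (by norm_num)
  rw [neg_add_cancel] at hstart
  rw [add_sub_cancel, add_sub_cancel] at hend
  have hcL' : dist ((F.F c).1 0) ((F.F c).1 L) = L := by
    rw [hM'.2.1, zero_sub, abs_neg, abs_of_nonneg (by linarith)]
  rw [Real.dist_eq, sub_zero, ← hcL']
  have := dist_dist_dist_le ((F.F p).1 0) ((F.F ν).1 T) ((F.F c).1 0) ((F.F c).1 L)
  rw [Real.dist_eq] at this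
  linarith [dist_comm ((F.F p).1 0) ((F.F c).1 0), dist_comm ((F.F ν).1 T) ((F.F c).1 L)]

theorem growth_rate_preserved_general
    {M M' : Type*} [MetricSpace M] [MetricSpace M']
    (hM : IsHadamardLike M) (hM' : IsHadamardLike M')
    (F : FlowConjugacy M M')
    (hUC : UnifContOnSphere F.F)
    (ν : SphereBundle M) {X X' : Type*} [MetricSpace X] [MetricSpace X']
    (S : VerticalSplitting ν X) (S' : VerticalSplitting (F.F ν) X')
    (σ : ℝ → X) (ρ : ℝ → ℝ) (σ' : ℝ → X') (ρ' : ℝ → ℝ)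
    (himage : ∀ t : ℝ, ∃ p : SphereBundle M, ParallelTo ν p ∧
      p.1 0 = S.Φ (pmk (σ t) (ρ t)) ∧ (F.F p).1 0 = S'.Φ (pmk (σ' t) (ρ' t)))
    (A : ℝ)
    (hA : Tendsto (fun t : ℝ => ρ t / t) atTop (nhds A)) :
    Tendsto (fun t : ℝ => ρ' t / t) atTop (nhds A) := by
  obtain ⟨x₀, e, hν⟩ := S.exists_eq_pmk_add (hM.isometry ν)
  obtain ⟨x₀', e', hν'⟩ := S'.exists_eq_pmk_add (hM'.isometry (F.F ν))
  have hshift : ∀ t, ρ' t = ρ t + (e' - e) := fun t => by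
    obtain ⟨p, hp, hp0, hFp0⟩ := himage t
    have hconj := tendsto_dist_conj_sub_dist hM hM' F hUC hp
    rw [hp0, hFp0] at hconj
    have := tendsto_nhds_unique (S'.tendsto_dist_sub hν' (σ' t) (ρ' t))
      (((S.tendsto_dist_sub hν (σ t) (ρ t)).add hconj).congr fun T => by ring)
    linarith
  simp_rw [hshift, add_div]
  simpa using hA.add (tendsto_const_nhds.div_atTop tendsto_id)

/-- Lemma 2 of the paper.  In the lifted conjugacy setting, let `ν` be a
geodesic of `M`, with product structures `M_ν ≅ X × ℝ` and `M'_{F ν} ≅ X' × ℝ`.  If a curve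
`c(t) = Φ (σ t, ρ t)` in `M_ν` has `ℝ`-growth rate `A` (i.e. `ρ t / t → A` as `t → ∞`) and
`t ↦ Φ' (σ' t, ρ' t)` is its image under the vertical-correspondence map `G_ν`, then the
image curve also has `ℝ`-growth rate `A`. -/
theorem growth_rate_preserved
    {Γ M M' : Type*} [Group Γ] [MetricSpace M] [MetricSpace M']
    [MulAction Γ M] [MulAction Γ M'] [IsIsometricSMul Γ M] [IsIsometricSMul Γ M']
    [SimplyConnectedSpace M] [SimplyConnectedSpace M']
    (n : ℕ) (hn : 3 ≤ n)
    (hdim : Nonempty (ChartedSpace (EuclideanSpace ℝ (Fin n)) M) ∧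
      Nonempty (ChartedSpace (EuclideanSpace ℝ (Fin n)) M'))
    (hM : IsHadamardLike M) (hM' : IsHadamardLike M')
    (hco : CocompactAction Γ M) (hco' : CocompactAction Γ M')
    (F : FlowConjugacy M M')
    (hUC : UnifContOnSphere F.F)
    (hequiv : ∀ (g : Γ) (c : SphereBundle M), F.F (gAct g c) = gAct g (F.F c))
    (ν : SphereBundle M) {X X' : Type*} [MetricSpace X] [MetricSpace X']
    (S : VerticalSplitting ν X) (S' : VerticalSplitting (F.F ν) X')
    (σ : ℝ → X) (ρ : ℝ → ℝ) (σ' : ℝ → X') (ρ' : ℝ → ℝ)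
    (himage : ∀ t : ℝ, ∃ p : SphereBundle M, ParallelTo ν p ∧
      p.1 0 = S.Φ (pmk (σ t) (ρ t)) ∧ (F.F p).1 0 = S'.Φ (pmk (σ' t) (ρ' t)))
    (A : ℝ)
    (hA : Tendsto (fun t : ℝ => ρ t / t) atTop (nhds A)) :
    Tendsto (fun t : ℝ => ρ' t / t) atTop (nhds A) :=
  growth_rate_preserved_general hM hM' F hUC ν S S' σ ρ σ' ρ' himage A hA
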